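/- arXiv:math/9908142 — 3 statements merged into one kernel-verified Lean document; each statement's English description precedes it below -/
import Mathlib

section
/- For nonnegative integer α, the polynomials a_i(x) defined by a_i(x) = (1/i!) ∑_{j=1}^{i} (-1)^{i+j+1} C(α+1, j-1) C(α+2, i-j) (α+3)_{i-j} x^j satisfy ∑_{i=1}^{∞} i·a_i(x) = (-1)^{α+1} x for every real x. -/
open Finset Real

/-- Rising factorial (Pochhammer symbol) `(a)_m`. -/
noncomputable def poch (a : ℝ) (m : ℕ) : ℝ := (ascPochhammer ℝ m).eval a

/-- Generalized binomial coefficient `C(a,b) = (a-b+1)_b / b!`. -/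
noncomputable def gbinom (a : ℝ) (b : ℕ) : ℝ := poch (a - b + 1) b / (Nat.factorial b : ℝ)

/-- Classical Laguerre polynomial `L_n^{(α)}(x)`. -/
noncomputable def lag (α : ℝ) (n : ℕ) (x : ℝ) : ℝ :=
  ∑ k ∈ Finset.range (n + 1),
    ((-1 : ℝ) ^ k / (Nat.factorial k : ℝ)) * gbinom ((n : ℝ) + α) (n - k) * x ^ k

/-- The coefficients `a_i(x)` of the infinite order Laguerre differential equation. -/
noncomputable def aCoeff (α : ℝ) (i : ℕ) (x : ℝ) : ℝ :=
  (1 / (Nat.factorial i : ℝ)) * ∑ j ∈ Finset.Icc 1 i,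
    (-1 : ℝ) ^ (i + j + 1) * gbinom (α + 1) (j - 1) * gbinom (α + 2) (i - j) *
      poch (α + 3) (i - j) * x ^ j

lemma L1 (n s : ℕ) :
    ∑ m ∈ range (n + 1), ((-1 : ℤ) ^ m * n.choose m * m.choose s)
      = if s = n then (-1) ^ n else 0 := by
  rcases le_or_gt s n with hs | hs
  · have hsplit := Finset.sum_range_add_sum_Ico
      (fun m => ((-1 : ℤ) ^ m * n.choose m * m.choose s)) (Nat.le_succ_of_le hs)
    have h1 : ∑ m ∈ range s, ((-1 : ℤ) ^ m * n.choose m * m.choose s) = 0 := by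
      apply Finset.sum_eq_zero
      intro m hm
      rw [Nat.choose_eq_zero_of_lt (mem_range.mp hm)]
      simp
    have h2 : ∑ m ∈ Ico s (n + 1), ((-1 : ℤ) ^ m * n.choose m * m.choose s)
        = ∑ t ∈ range (n + 1 - s), ((-1 : ℤ) ^ (s + t) * n.choose (s + t) * (s + t).choose s) := by
      rw [Finset.sum_Ico_eq_sum_range]
    have h3 : ∀ t ∈ range (n + 1 - s),
        ((-1 : ℤ) ^ (s + t) * n.choose (s + t) * (s + t).choose s)
        = (-1 : ℤ) ^ s * n.choose s * ((-1 : ℤ) ^ t * (n - s).choose t) := by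
      intro t ht
      have htn : s + t ≤ n := by
        have := mem_range.mp ht; omega
      have hcm := Nat.choose_mul (n := n) (Nat.le_add_right s t)
      rw [Nat.add_sub_cancel_left] at hcm
      have hcm' : ((n.choose (s+t) : ℤ)) * ((s+t).choose s) = (n.choose s : ℤ) * ((n-s).choose t) := by
        exact_mod_cast congrArg (Nat.cast : ℕ → ℤ) hcm
      rw [pow_add]
      calc (-1:ℤ)^s * (-1)^t * ↑(n.choose (s + t)) * ↑((s + t).choose s)
          = (-1:ℤ)^s * (-1)^t * (↑(n.choose (s + t)) * ↑((s + t).choose s)) := by ring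
        _ = (-1:ℤ)^s * (-1)^t * ((n.choose s : ℤ) * ((n-s).choose t)) := by rw [hcm']
        _ = (-1 : ℤ) ^ s * n.choose s * ((-1 : ℤ) ^ t * (n - s).choose t) := by ring
    rw [← hsplit, h1, zero_add, h2, Finset.sum_congr rfl h3, ← Finset.mul_sum]
    have hrange : n + 1 - s = (n - s) + 1 := by omega
    rw [hrange, Int.alternating_sum_range_choose]
    rcases eq_or_lt_of_le hs with h | h
    · subst h; simp
    · rw [if_neg (by omega), if_neg (by omega)]
      ring
  · rw [if_neg (by omega)]
    apply Finset.sum_eq_zero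
    intro m hm
    have hms : m < s := by have := mem_range.mp hm; omega
    rw [Nat.choose_eq_zero_of_lt hms]
    simp

lemma L2 (n k : ℕ) (hk : k ≤ n) :
    ∑ m ∈ range (n + 1), ((-1 : ℤ) ^ m * n.choose m * (n + m).choose k)
      = if k = n then (-1) ^ n else 0 := by
  have hexp : ∀ m, ((n + m).choose k : ℤ)
      = ∑ r ∈ range (k + 1), (n.choose r : ℤ) * m.choose (k - r) := by
    intro m
    rw [Nat.add_choose_eq]
    rw [Finset.Nat.sum_antidiagonal_eq_sum_range_succ_mk]
    push_cast
    rfl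
  calc ∑ m ∈ range (n + 1), ((-1 : ℤ) ^ m * n.choose m * (n + m).choose k)
      = ∑ m ∈ range (n + 1), ∑ r ∈ range (k + 1),
          (n.choose r : ℤ) * ((-1 : ℤ) ^ m * n.choose m * m.choose (k - r)) := by
        refine Finset.sum_congr rfl fun m _ => ?_
        rw [hexp m, Finset.mul_sum]
        refine Finset.sum_congr rfl fun r _ => ?_
        ring
    _ = ∑ r ∈ range (k + 1), (n.choose r : ℤ) *
          ∑ m ∈ range (n + 1), ((-1 : ℤ) ^ m * n.choose m * m.choose (k - r)) := by
        rw [Finset.sum_comm]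
        exact Finset.sum_congr rfl fun r _ => (Finset.mul_sum _ _ _).symm
    _ = ∑ r ∈ range (k + 1), (n.choose r : ℤ) * (if k - r = n then (-1 : ℤ) ^ n else 0) := by
        exact Finset.sum_congr rfl fun r _ => by rw [L1]
    _ = if k = n then (-1) ^ n else 0 := by
        rcases eq_or_lt_of_le hk with h | h
        · subst h
          rw [if_pos rfl]
          rw [Finset.sum_eq_single 0]
          · simp
          · intro r hr hr0
            have := mem_range.mp hr
            rw [if_neg (by omega), mul_zero]
          · intro h0; exact absurd (mem_range.mpr (by omega)) h0
        · rw [if_neg (by omega)]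
          apply Finset.sum_eq_zero
          intro r hr
          rw [if_neg (by have := mem_range.mp hr; omega), mul_zero]

lemma poch_nat (a m : ℕ) : poch (a : ℝ) m = (a.ascFactorial m : ℝ) := by
  rw [poch, ← ascPochhammer_eval_cast, ascPochhammer_nat_eq_ascFactorial]

lemma gbinom_nat (a b : ℕ) (h : b ≤ a) : gbinom (a : ℝ) b = (a.choose b : ℝ) := by
  rw [gbinom]
  have h1 : (a : ℝ) - b + 1 = ((a - b + 1 : ℕ) : ℝ) := by
    push_cast [Nat.cast_sub h]; ring
  rw [h1, poch_nat, Nat.ascFactorial_eq_factorial_mul_choose, Nat.sub_add_cancel h]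
  push_cast
  rw [mul_comm, mul_div_assoc, div_self (by positivity), mul_one]

lemma gbinom_nat_zero (a b : ℕ) (h : a < b) : gbinom (a : ℝ) b = 0 := by
  rw [gbinom, poch]
  have : (ascPochhammer ℝ b).eval ((a : ℝ) - b + 1) = 0 := by
    rw [ascPochhammer_eval_eq_zero_iff]
    refine ⟨b - 1 - a, by omega, ?_⟩
    have h1 : ((b - 1 - a : ℕ) : ℝ) = (b : ℝ) - 1 - a := by
      rw [Nat.cast_sub (by omega : a ≤ b - 1), Nat.cast_sub (by omega : 1 ≤ b)]
      push_cast; ring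
    rw [h1]; ring
  rw [this, zero_div]

lemma cast1 (α : ℕ) : (α : ℝ) + 1 = ((α + 1 : ℕ) : ℝ) := by push_cast; ring
lemma cast2 (α : ℕ) : (α : ℝ) + 2 = ((α + 2 : ℕ) : ℝ) := by push_cast; ring
lemma cast3 (α : ℕ) : (α : ℝ) + 3 = ((α + 3 : ℕ) : ℝ) := by push_cast; ring

lemma innerSumLag (α : ℕ) (x : ℝ) (j : ℕ) (hj1 : 1 ≤ j) (hj2 : j ≤ α + 2) :
    ∑ m ∈ range (α + 3),
      (((j + m : ℕ) : ℝ) * (1 / (((j + m).factorial : ℕ) : ℝ) *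
        ((-1 : ℝ) ^ ((j + m) + j + 1) * gbinom ((α : ℝ) + 1) (j - 1) *
          gbinom ((α : ℝ) + 2) ((j + m) - j) * poch ((α : ℝ) + 3) ((j + m) - j) * x ^ j)))
      = if j = 1 then (-1 : ℝ) ^ (α + 1) * x else 0 := by
  set N := α + 2 with hN
  have hk : N + 1 - j ≤ N := by omega
  set C : ℝ := -(((α + 1).choose (j - 1) : ℝ)) * ((N + 1 - j).factorial : ℝ)
      / (N.factorial : ℝ) * x ^ j with hC
  have hstep : ∀ m ∈ range (α + 3),
      (((j + m : ℕ) : ℝ) * (1 / (((j + m).factorial : ℕ) : ℝ) *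
        ((-1 : ℝ) ^ ((j + m) + j + 1) * gbinom ((α : ℝ) + 1) (j - 1) *
          gbinom ((α : ℝ) + 2) ((j + m) - j) * poch ((α : ℝ) + 3) ((j + m) - j) * x ^ j)))
      = C * ((-1 : ℝ) ^ m * (N.choose m : ℝ) * ((N + m).choose (N + 1 - j) : ℝ)) := by
    intro m hm
    have hmN : m ≤ N := by have := mem_range.mp hm; omega
    have hjm : (j + m) - j = m := by omega
    -- evaluate gbinoms and poch
    have hg1 : gbinom ((α : ℝ) + 1) (j - 1) = (((α + 1).choose (j - 1) : ℕ) : ℝ) := by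
      rw [cast1, gbinom_nat _ _ (by omega)]
    have hg2 : gbinom ((α : ℝ) + 2) m = ((N.choose m : ℕ) : ℝ) := by
      rw [cast2, gbinom_nat _ _ (by omega)]
    have hg3 : poch ((α : ℝ) + 3) m = ((m.factorial * (N + m).choose m : ℕ) : ℝ) := by
      rw [cast3, poch_nat]
      congr 1
      have : α + 3 = N + 1 := by omega
      rw [this, Nat.ascFactorial_eq_factorial_mul_choose]
    have hsign : (-1 : ℝ) ^ ((j + m) + j + 1) = (-1 : ℝ) ^ m * (-1) := by
      have he : (j + m) + j + 1 = 2 * j + (m + 1) := by omega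
      rw [he, pow_add, pow_mul, neg_one_sq, one_pow, pow_succ, one_mul]
    -- key factorial identity
    have e1 : (N + m).choose m * m.factorial * N.factorial = (N + m).factorial := by
      have := Nat.choose_mul_factorial_mul_factorial (Nat.le_add_left m N)
      rwa [Nat.add_sub_cancel] at this
    have e2 : (N + m).choose (N + 1 - j) * (N + 1 - j).factorial * (j + m - 1).factorial
        = (N + m).factorial := by
      have h2 : N + 1 - j ≤ N + m := by omega
      have := Nat.choose_mul_factorial_mul_factorial h2
      rwa [show N + m - (N + 1 - j) = j + m - 1 by omega] at this
    have e3 : (j + m).factorial = (j + m) * (j + m - 1).factorial := by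
      obtain ⟨t, ht⟩ : ∃ t, j + m = t + 1 := ⟨j + m - 1, by omega⟩
      rw [ht, Nat.factorial_succ, Nat.add_sub_cancel]
    have e : (j + m) * (m.factorial * (N + m).choose m) * N.factorial
        = (N + 1 - j).factorial * (N + m).choose (N + 1 - j) * (j + m).factorial := by
      rw [e3]
      calc (j + m) * (m.factorial * (N + m).choose m) * N.factorial
          = (j + m) * ((N + m).choose m * m.factorial * N.factorial) := by ring
        _ = (j + m) * (N + m).factorial := by rw [e1]
        _ = (j + m) * ((N + m).choose (N + 1 - j) * (N + 1 - j).factorial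
              * (j + m - 1).factorial) := by rw [e2]
        _ = (N + 1 - j).factorial * (N + m).choose (N + 1 - j)
              * ((j + m) * (j + m - 1).factorial) := by ring
    have ec : ((j + m : ℕ) : ℝ) * ((m.factorial : ℝ) * ((N + m).choose m : ℝ)) * (N.factorial : ℝ)
        = ((N + 1 - j).factorial : ℝ) * ((N + m).choose (N + 1 - j) : ℝ)
          * ((j + m).factorial : ℝ) := by exact_mod_cast congrArg (Nat.cast : ℕ → ℝ) e
    have hfne : (((j + m).factorial : ℕ) : ℝ) ≠ 0 := by positivity
    have hNne : ((N.factorial : ℕ) : ℝ) ≠ 0 := by positivity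
    have key : ((j + m : ℕ) : ℝ) * ((m.factorial : ℝ) * (((N + m).choose m : ℕ) : ℝ))
          / (((j + m).factorial : ℕ) : ℝ)
        = (((N + 1 - j).factorial : ℕ) : ℝ) * (((N + m).choose (N + 1 - j) : ℕ) : ℝ)
          / ((N.factorial : ℕ) : ℝ) := by
      rw [div_eq_div_iff hfne hNne]
      linear_combination ec
    rw [hjm, hg1, hg2, hg3, hsign, hC, Nat.cast_mul]
    calc ((j + m : ℕ) : ℝ) * (1 / (((j + m).factorial : ℕ) : ℝ) *
          ((-1 : ℝ) ^ m * -1 * (((α + 1).choose (j - 1) : ℕ) : ℝ) * ((N.choose m : ℕ) : ℝ) *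
            ((m.factorial : ℝ) * (((N + m).choose m : ℕ) : ℝ)) * x ^ j))
        = ((-1 : ℝ) ^ m * (((α + 1).choose (j - 1) : ℕ) : ℝ) * ((N.choose m : ℕ) : ℝ) * x ^ j)
            * (((j + m : ℕ) : ℝ) * ((m.factorial : ℝ) * (((N + m).choose m : ℕ) : ℝ))
              / (((j + m).factorial : ℕ) : ℝ)) * (-1) := by ring
      _ = ((-1 : ℝ) ^ m * (((α + 1).choose (j - 1) : ℕ) : ℝ) * ((N.choose m : ℕ) : ℝ) * x ^ j)
            * ((((N + 1 - j).factorial : ℕ) : ℝ) * (((N + m).choose (N + 1 - j) : ℕ) : ℝ)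
              / ((N.factorial : ℕ) : ℝ)) * (-1) := by rw [key]
      _ = -(((α + 1).choose (j - 1) : ℕ) : ℝ) * (((N + 1 - j).factorial : ℕ) : ℝ)
            / ((N.factorial : ℕ) : ℝ) * x ^ j
            * ((-1 : ℝ) ^ m * ((N.choose m : ℕ) : ℝ) * (((N + m).choose (N + 1 - j) : ℕ) : ℝ)) := by
          ring
  rw [Finset.sum_congr rfl hstep, ← Finset.mul_sum]
  have hL2 := L2 N (N + 1 - j) hk
  have hcast : ∑ m ∈ range (α + 3), ((-1 : ℝ) ^ m * (N.choose m : ℝ) * ((N + m).choose (N + 1 - j) : ℝ))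
      = if N + 1 - j = N then (-1 : ℝ) ^ N else 0 := by
    have : α + 3 = N + 1 := by omega
    rw [this]
    exact_mod_cast congrArg (Int.cast : ℤ → ℝ) hL2
  rw [hcast]
  by_cases hj : j = 1
  · subst hj
    rw [if_pos (by omega), if_pos rfl, hC]
    have h1 : N + 1 - 1 = N := by omega
    rw [h1]
    have hNne : ((N.factorial : ℕ) : ℝ) ≠ 0 := by positivity
    have hch : ((α + 1).choose 0 : ℝ) = 1 := by norm_num
    rw [Nat.sub_self, hch]
    have hsgn : (-1 : ℝ) ^ (α + 1) = -(-1 : ℝ) ^ N := by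
      rw [hN, show α + 2 = (α + 1) + 1 by ring, pow_succ]
      ring
    field_simp
    rw [hsgn]
    ring
  · rw [if_neg (by omega), if_neg hj, mul_zero]

/-- for nonnegative integer α, `∑_{i=1}^∞ i a_i(x) = (-1)^{α+1} x`. -/
theorem statement3 (α : ℕ) (x : ℝ) :
    ∑' i : ℕ, ((i + 1 : ℕ) : ℝ) * aCoeff (α : ℝ) (i + 1) x = (-1 : ℝ) ^ (α + 1) * x := by
  set M := 2 * α + 4 with hM
  -- the generic term as a double sum
  set g : ℕ → ℕ → ℝ := fun n j => ((n : ℕ) : ℝ) * (1 / ((n.factorial : ℕ) : ℝ) *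
    ((-1 : ℝ) ^ (n + j + 1) * gbinom ((α : ℝ) + 1) (j - 1) *
      gbinom ((α : ℝ) + 2) (n - j) * poch ((α : ℝ) + 3) (n - j) * x ^ j)) with hg
  have hgz : ∀ n j : ℕ, 1 ≤ j → j ≤ n → (α + 2 < j ∨ α + 2 < n - j) → g n j = 0 := by
    intro n j h1 h2 h3
    rcases h3 with h | h
    · have hz : gbinom ((α : ℝ) + 1) (j - 1) = 0 := by
        rw [cast1 α]; exact gbinom_nat_zero (α + 1) (j - 1) (by omega)
      simp [hg, hz]
    · have hz : gbinom ((α : ℝ) + 2) (n - j) = 0 := by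
        rw [cast2 α]; exact gbinom_nat_zero (α + 2) (n - j) (by omega)
      simp [hg, hz]
  have hterm : ∀ n : ℕ, ((n : ℕ) : ℝ) * aCoeff (α : ℝ) n x = ∑ j ∈ Icc 1 n, g n j := by
    intro n
    rw [aCoeff, Finset.mul_sum, Finset.mul_sum]
  have hvanish : ∀ i : ℕ, i ∉ range M → ((i + 1 : ℕ) : ℝ) * aCoeff (α : ℝ) (i + 1) x = 0 := by
    intro i hi
    have hiM : M ≤ i := by simpa using hi
    rw [hterm]
    apply Finset.sum_eq_zero
    intro j hj
    have hj' := Finset.mem_Icc.mp hj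
    apply hgz _ _ hj'.1 hj'.2
    omega
  rw [tsum_eq_sum hvanish]
  have hre : ∑ i ∈ range M, ((i + 1 : ℕ) : ℝ) * aCoeff (α : ℝ) (i + 1) x
      = ∑ n ∈ Icc 1 M, ∑ j ∈ Icc 1 n, g n j := by
    rw [← Finset.Ico_add_one_right_eq_Icc, Finset.sum_Ico_eq_sum_range]
    simp only [Nat.add_sub_cancel, Nat.succ_sub_one]
    exact Finset.sum_congr rfl fun i _ => by rw [hterm, Nat.add_comm 1 i]
  rw [hre]
  have hswap : ∑ n ∈ Icc 1 M, ∑ j ∈ Icc 1 n, g n j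
      = ∑ j ∈ Icc 1 M, ∑ n ∈ Icc j M, g n j := by
    apply Finset.sum_comm'
    intro n j
    simp only [mem_Icc]
    omega
  rw [hswap]
  -- restrict outer sum to j ≤ α + 2
  have houter : ∑ j ∈ Icc 1 M, ∑ n ∈ Icc j M, g n j
      = ∑ j ∈ Icc 1 (α + 2), ∑ n ∈ Icc j M, g n j := by
    symm
    apply Finset.sum_subset
    · intro j hj
      have := Finset.mem_Icc.mp hj
      exact Finset.mem_Icc.mpr ⟨this.1, by omega⟩
    · intro j hj hj2
      have h1 := Finset.mem_Icc.mp hj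
      have h2 : α + 2 < j := by
        by_contra h
        exact hj2 (Finset.mem_Icc.mpr ⟨h1.1, by omega⟩)
      apply Finset.sum_eq_zero
      intro n hn
      have hn' := Finset.mem_Icc.mp hn
      exact hgz n j (by omega) hn'.1 (Or.inl h2)
  rw [houter]
  have hinner : ∀ j ∈ Icc 1 (α + 2),
      ∑ n ∈ Icc j M, g n j = if j = 1 then (-1 : ℝ) ^ (α + 1) * x else 0 := by
    intro j hj
    have hj' := Finset.mem_Icc.mp hj
    have h1 : ∑ n ∈ Icc j M, g n j = ∑ m ∈ range (M + 1 - j), g (j + m) j := by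
      rw [← Finset.Ico_add_one_right_eq_Icc, Finset.sum_Ico_eq_sum_range]
    have h2 : ∑ m ∈ range (M + 1 - j), g (j + m) j = ∑ m ∈ range (α + 3), g (j + m) j := by
      symm
      apply Finset.sum_subset
      · intro m hm
        have := mem_range.mp hm
        exact mem_range.mpr (by omega)
      · intro m hm hm2
        have hm' : α + 3 ≤ m := by
          by_contra h
          exact hm2 (mem_range.mpr (by omega))
        exact hgz (j + m) j hj'.1 (by omega) (Or.inr (by omega))
    rw [h1, h2]
    have := innerSumLag α x j hj'.1 hj'.2
    rw [← this]
  rw [Finset.sum_congr rfl hinner]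
  rw [Finset.sum_ite_eq' (Icc 1 (α + 2)) 1 (fun _ => (-1 : ℝ) ^ (α + 1) * x)]
  rw [if_pos (Finset.mem_Icc.mpr ⟨le_refl 1, by omega⟩)]
end

section
/- For nonnegative integer α and each integer k ≥ 1, the coefficients a_i(x) = (1/i!) ∑_{j=1}^{i} (-1)^{i+j+1} C(α+1, j-1) C(α+2, i-j) (α+3)_{i-j} x^j satisfy the symmetry ∑_{i=k}^{∞} C(i,k) a_i(x) = (-1)^{α+k} a_k(-x) for all real x. -/
open Finset Real

lemma gbinom_eq_choose (a : ℝ) (b : ℕ) : gbinom a b = Ring.choose a b := by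
  have h := Ring.factorial_nsmul_multichoose_eq_ascPochhammer (a - b + 1) b
  rw [Polynomial.ascPochhammer_smeval_eq_eval, nsmul_eq_mul] at h
  unfold gbinom poch Ring.choose
  rw [← Ring.multichoose_eq_multichoose, ← h]
  have : (b.factorial : ℝ) ≠ 0 := Nat.cast_ne_zero.mpr b.factorial_ne_zero
  field_simp
  rfl

lemma gbinom_natCast (n k : ℕ) : gbinom (n : ℝ) k = (n.choose k : ℝ) := by
  rw [gbinom_eq_choose, Ring.choose_natCast]

lemma gbinom_add (a b : ℝ) (N : ℕ) :
    gbinom (a + b) N = ∑ n ∈ Finset.range (N + 1), gbinom a n * gbinom b (N - n) := by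
  rw [gbinom_eq_choose, Ring.add_choose_eq N (Commute.all a b),
    Finset.Nat.sum_antidiagonal_eq_sum_range_succ (fun i j => Ring.choose a i * Ring.choose b j)]
  exact Finset.sum_congr rfl fun n _ => by rw [gbinom_eq_choose, gbinom_eq_choose]

lemma poch_succ_left (r : ℝ) (m : ℕ) : poch r (m + 1) = r * poch (r + 1) m := by
  unfold poch
  rw [ascPochhammer_succ_left, Polynomial.X_mul, Polynomial.eval_mul_X, Polynomial.eval_comp]
  simp [mul_comm]

lemma poch_succ_right (r : ℝ) (m : ℕ) : poch r (m + 1) = poch r m * (r + m) :=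
  ascPochhammer_succ_eval m r

lemma poch_neg (x : ℝ) (m : ℕ) : poch (-x) m = (-1) ^ m * poch (x - m + 1) m := by
  induction m generalizing x with
  | zero => simp [poch]
  | succ m ih =>
    rw [poch_succ_left, show -x + 1 = -(x-1) by ring, ih (x - 1), poch_succ_right]
    push_cast
    ring_nf

lemma poch_nat_choose (B m : ℕ) : poch ((B:ℝ) + 1) m = ((B+m).choose m : ℝ) * (m.factorial : ℝ) := by
  have h := gbinom_natCast (B + m) m
  unfold gbinom at h
  have hc : ((B + m : ℕ) : ℝ) - m + 1 = (B : ℝ) + 1 := by push_cast; ring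
  rw [hc] at h
  have : (m.factorial : ℝ) ≠ 0 := Nat.cast_ne_zero.mpr m.factorial_ne_zero
  field_simp at h
  linarith [h]

lemma gbinom_neg (B m : ℕ) : gbinom (-(B:ℝ) - 1) m = (-1) ^ m * ((B+m).choose m : ℝ) := by
  unfold gbinom
  rw [show -(B:ℝ) - 1 - m + 1 = -((B:ℝ) + m) by ring, poch_neg]
  rw [show (B:ℝ) + m - m + 1 = (B:ℝ) + 1 by ring, poch_nat_choose]
  have : (m.factorial : ℝ) ≠ 0 := Nat.cast_ne_zero.mpr m.factorial_ne_zero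
  field_simp

noncomputable def Wc (B m : ℕ) : ℝ :=
  (B.choose m : ℝ) * ((B + m).choose m : ℝ) * (m.factorial : ℝ)

lemma key (B c : ℕ) :
    ∑ n ∈ Finset.range (B + 1), gbinom (-(B:ℝ) - 1) n * gbinom (c : ℝ) (B - n)
      = gbinom ((c : ℝ) - B - 1) B := by
  have h := gbinom_add (-(B:ℝ) - 1) (c : ℝ) B
  rw [show -(B:ℝ) - 1 + c = (c:ℝ) - B - 1 by ring] at h
  exact h.symm

lemma core1 (B d : ℕ) :
    ∑ i ∈ Finset.range (2*B + 1), (-1:ℝ)^i / (i.factorial : ℝ) * Wc B (i + d)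
      = (-1:ℝ)^(B+d) * Wc B d := by
  by_cases hd : d ≤ B
  · -- truncate
    have h1 : ∑ i ∈ Finset.range (2*B + 1), (-1:ℝ)^i / (i.factorial : ℝ) * Wc B (i + d)
        = ∑ i ∈ Finset.range (B - d + 1), (-1:ℝ)^i / (i.factorial : ℝ) * Wc B (i + d) := by
      refine (Finset.sum_subset (Finset.range_subset_range.mpr (by omega)) ?_).symm
      intro i _ hi
      simp only [Finset.mem_range, not_lt] at hi
      have : B < i + d := by omega
      simp [Wc, Nat.choose_eq_zero_of_lt this]
    set K : ℝ := (B.factorial : ℝ) / ((B - d).factorial : ℝ) with hK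
    have h2 : ∀ i ∈ Finset.range (B - d + 1),
        (-1:ℝ)^i / (i.factorial : ℝ) * Wc B (i + d)
          = K * (-1:ℝ)^d * (gbinom (-(B:ℝ) - 1) (d + i) * gbinom ((B - d : ℕ) : ℝ) (B - (d + i))) := by
      intro i hi
      simp only [Finset.mem_range] at hi
      have hiBd : i ≤ B - d := by omega
      rw [gbinom_neg, gbinom_natCast]
      have e1 : ((B.choose (i+d)) : ℝ) = (B.factorial : ℝ) / ((i+d).factorial * (B - (i+d)).factorial) :=
        Nat.cast_choose ℝ (by omega)
      have e2 : (((B-d).choose (B - (d+i))) : ℝ)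
          = ((B-d).factorial : ℝ) / ((B - (d+i)).factorial * (B - d - (B - (d+i))).factorial) :=
        Nat.cast_choose ℝ (by omega)
      have e3 : B - d - (B - (d + i)) = i := by omega
      have e4 : B - (i + d) = B - (d + i) := by omega
      have e5 : (B + (d+i)).choose (d+i) = (B + (i+d)).choose (i+d) := by rw [Nat.add_comm d i]
      rw [e2, e3, e5]
      unfold Wc
      rw [e1, e4, hK]
      have f1 : ((i+d).factorial : ℝ) ≠ 0 := Nat.cast_ne_zero.mpr (Nat.factorial_ne_zero _)
      have f2 : ((B - (d+i)).factorial : ℝ) ≠ 0 := Nat.cast_ne_zero.mpr (Nat.factorial_ne_zero _)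
      have f3 : ((B - d).factorial : ℝ) ≠ 0 := Nat.cast_ne_zero.mpr (Nat.factorial_ne_zero _)
      have f4 : ((i).factorial : ℝ) ≠ 0 := Nat.cast_ne_zero.mpr (Nat.factorial_ne_zero _)
      have hdd : (-1:ℝ)^d * (-1:ℝ)^d = 1 := by
        rw [← pow_add]; exact Even.neg_one_pow ⟨d, rfl⟩
      field_simp
      rw [show (-1:ℝ)^(d+i) = (-1:ℝ)^d * (-1:ℝ)^i from pow_add (-1) d i]
      linear_combination -((-1:ℝ)^i * (((B + (i + d)).choose (i + d) : ℕ) : ℝ)) * hdd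
    rw [h1, Finset.sum_congr rfl h2, ← Finset.mul_sum]
    -- reindex
    have h3 : ∑ i ∈ Finset.range (B - d + 1),
        gbinom (-(B:ℝ) - 1) (d + i) * gbinom ((B - d : ℕ) : ℝ) (B - (d + i))
        = ∑ n ∈ Finset.range (B + 1), gbinom (-(B:ℝ) - 1) n * gbinom ((B - d : ℕ) : ℝ) (B - n) := by
      symm
      rw [Finset.range_eq_Ico, ← Finset.sum_Ico_consecutive _ (Nat.zero_le d) (by omega : d ≤ B + 1)]
      have hz : ∑ n ∈ Finset.Ico 0 d, gbinom (-(B:ℝ) - 1) n * gbinom ((B - d : ℕ) : ℝ) (B - n) = 0 := by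
        refine Finset.sum_eq_zero fun n hn => ?_
        simp only [Finset.mem_Ico] at hn
        rw [gbinom_natCast, Nat.choose_eq_zero_of_lt (by omega)]
        simp
      rw [hz, zero_add, Finset.sum_Ico_eq_sum_range, show B + 1 - d = B - d + 1 by omega,
        Finset.range_eq_Ico]
    rw [h3, key]
    have hc : ((B - d : ℕ) : ℝ) - B - 1 = -(d:ℝ) - 1 := by
      rw [Nat.cast_sub hd]; ring
    rw [hc, gbinom_neg]
    -- final arithmetic
    unfold Wc
    have e1 : ((B.choose d) : ℝ) = (B.factorial : ℝ) / (d.factorial * (B - d).factorial) :=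
      Nat.cast_choose ℝ hd
    have e5 : (d + B).choose B = (B + d).choose d := by
      have h := Nat.choose_symm (Nat.le_add_left d B)
      rw [Nat.add_sub_cancel] at h
      rw [Nat.add_comm d B, h]
    rw [e1, e5]
    have f1 : ((d).factorial : ℝ) ≠ 0 := Nat.cast_ne_zero.mpr (Nat.factorial_ne_zero _)
    have f3 : ((B - d).factorial : ℝ) ≠ 0 := Nat.cast_ne_zero.mpr (Nat.factorial_ne_zero _)
    rw [show (-1:ℝ)^(B+d) = (-1:ℝ)^B * (-1:ℝ)^d from pow_add (-1) B d, hK]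
    field_simp
  · -- d > B : everything vanishes
    have hz : ∀ m, B < m → Wc B m = 0 := fun m hm => by
      simp [Wc, Nat.choose_eq_zero_of_lt hm]
    rw [hz d (by omega)]
    rw [Finset.sum_eq_zero fun i _ => by rw [hz (i+d) (by omega)]; ring]
    ring

lemma core2 (B e : ℕ) (he : 1 ≤ e) (heB : e ≤ B) :
    ∑ n ∈ Finset.range (2*B + 1 - e), (-1:ℝ)^n * Wc B n / ((n+e).factorial : ℝ) = 0 := by
  have h1 : ∑ n ∈ Finset.range (2*B + 1 - e), (-1:ℝ)^n * Wc B n / ((n+e).factorial : ℝ)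
      = ∑ n ∈ Finset.range (B + 1), (-1:ℝ)^n * Wc B n / ((n+e).factorial : ℝ) := by
    refine (Finset.sum_subset (Finset.range_subset_range.mpr (by omega)) ?_).symm
    intro n _ hn
    simp only [Finset.mem_range, not_lt] at hn
    simp [Wc, Nat.choose_eq_zero_of_lt (show B < n by omega)]
  set K : ℝ := (B.factorial : ℝ) / ((B + e).factorial : ℝ) with hK
  have h2 : ∀ n ∈ Finset.range (B + 1),
      (-1:ℝ)^n * Wc B n / ((n+e).factorial : ℝ)
        = K * (gbinom (-(B:ℝ) - 1) n * gbinom ((B + e : ℕ) : ℝ) (B - n)) := by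
    intro n hn
    simp only [Finset.mem_range] at hn
    have hnB : n ≤ B := by omega
    rw [gbinom_neg, gbinom_natCast]
    have e1 : ((B.choose n) : ℝ) = (B.factorial : ℝ) / (n.factorial * (B - n).factorial) :=
      Nat.cast_choose ℝ hnB
    have e2 : (((B+e).choose (B - n)) : ℝ)
        = ((B+e).factorial : ℝ) / ((B - n).factorial * (B + e - (B - n)).factorial) :=
      Nat.cast_choose ℝ (by omega)
    have e3 : B + e - (B - n) = n + e := by omega
    rw [e2, e3]
    unfold Wc
    rw [e1, hK]
    have f1 : ((n).factorial : ℝ) ≠ 0 := Nat.cast_ne_zero.mpr (Nat.factorial_ne_zero _)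
    have f2 : ((B - n).factorial : ℝ) ≠ 0 := Nat.cast_ne_zero.mpr (Nat.factorial_ne_zero _)
    have f3 : ((B + e).factorial : ℝ) ≠ 0 := Nat.cast_ne_zero.mpr (Nat.factorial_ne_zero _)
    have f4 : ((n + e).factorial : ℝ) ≠ 0 := Nat.cast_ne_zero.mpr (Nat.factorial_ne_zero _)
    field_simp
  rw [h1, Finset.sum_congr rfl h2, ← Finset.mul_sum, key]
  have hc : ((B + e : ℕ) : ℝ) - B - 1 = ((e - 1 : ℕ) : ℝ) := by
    rw [Nat.cast_sub he]; push_cast; ring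
  rw [hc, gbinom_natCast, Nat.choose_eq_zero_of_lt (by omega : e - 1 < B)]
  simp

lemma neg_one_pow_shift (a b : ℕ) (h : ∃ c, a = b + 2*c ∨ b = a + 2*c) :
    (-1:ℝ)^a = (-1:ℝ)^b := by
  obtain ⟨c, hc | hc⟩ := h <;>
    rw [hc, pow_add, pow_mul] <;> norm_num

lemma perj (B k j : ℕ) (hk : 1 ≤ k) (hj1 : 1 ≤ j) (hjB : j ≤ B) :
    ∑ i ∈ Finset.Icc (j - k) (2*B),
        ((i+k).choose k : ℝ) / (((i+k).factorial : ℝ)) * ((-1:ℝ)^(i+k+j+1) * Wc B (i+k-j))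
      = if j ≤ k then
          (-1:ℝ)^(B+k) * (1/(k.factorial : ℝ)) * ((-1:ℝ)^(k+j+1) * (-1:ℝ)^j * Wc B (k-j))
        else 0 := by
  have hck : ∀ i : ℕ, ((i+k).choose k : ℝ) / (((i+k).factorial : ℝ))
      = 1/((k.factorial : ℝ) * (i.factorial : ℝ)) := by
    intro i
    have h := Nat.choose_mul_factorial_mul_factorial (Nat.le_add_left k i)
    rw [Nat.add_sub_cancel] at h
    have : (((i+k).choose k * k.factorial * i.factorial : ℕ) : ℝ) = ((i+k).factorial : ℝ) := by
      exact_mod_cast h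
    push_cast at this
    have f1 : ((k.factorial : ℝ)) ≠ 0 := Nat.cast_ne_zero.mpr (Nat.factorial_ne_zero _)
    have f2 : ((i.factorial : ℝ)) ≠ 0 := Nat.cast_ne_zero.mpr (Nat.factorial_ne_zero _)
    have f3 : (((i+k).factorial : ℝ)) ≠ 0 := Nat.cast_ne_zero.mpr (Nat.factorial_ne_zero _)
    field_simp
    linarith [this]
  by_cases hjk : j ≤ k
  · rw [if_pos hjk]
    have hIcc : Finset.Icc (j - k) (2*B) = Finset.range (2*B+1) := by
      rw [Nat.sub_eq_zero_of_le hjk]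
      ext a; simp
    rw [hIcc]
    have hterm : ∀ i ∈ Finset.range (2*B+1),
        ((i+k).choose k : ℝ) / (((i+k).factorial : ℝ)) * ((-1:ℝ)^(i+k+j+1) * Wc B (i+k-j))
          = (1/(k.factorial : ℝ)) * ((-1:ℝ)^(k+j+1)) * ((-1:ℝ)^i / (i.factorial : ℝ) * Wc B (i + (k-j))) := by
      intro i _
      rw [hck i, show i+k-j = i + (k-j) by omega,
        show (-1:ℝ)^(i+k+j+1) = (-1:ℝ)^i * (-1:ℝ)^(k+j+1) by
          rw [← pow_add]; congr 1; omega]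
      field_simp
    rw [Finset.sum_congr rfl hterm, ← Finset.mul_sum, core1]
    have hs : (-1:ℝ)^(B+(k-j)) = (-1:ℝ)^(B+k) * (-1:ℝ)^j := by
      rw [← pow_add]
      exact neg_one_pow_shift _ _ ⟨j, Or.inr (by omega)⟩
    rw [hs]; ring
  · rw [if_neg hjk]
    set e := j - k with he
    have he1 : 1 ≤ e := by omega
    have heB : e ≤ B := by omega
    have hIcc : Finset.Icc (j - k) (2*B) = Finset.Ico e (2*B+1) := by
      ext a; simp [he]
    rw [hIcc, Finset.sum_Ico_eq_sum_range]
    have hterm : ∀ n ∈ Finset.range (2*B+1-e),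
        ((e+n+k).choose k : ℝ) / (((e+n+k).factorial : ℝ)) * ((-1:ℝ)^(e+n+k+j+1) * Wc B (e+n+k-j))
          = -(1/(k.factorial : ℝ)) * ((-1:ℝ)^n * Wc B n / ((n+e).factorial : ℝ)) := by
      intro n _
      rw [hck (e+n), show e+n+k-j = n by omega,
        show (-1:ℝ)^(e+n+k+j+1) = -(-1:ℝ)^n by
          rw [show e+n+k+j+1 = n + (2*j+1) by omega, pow_add, pow_add, pow_mul]
          norm_num,
        show (e+n) = (n+e) by omega]
      field_simp
    rw [Finset.sum_congr rfl hterm, ← Finset.mul_sum, core2 B e he1 heB]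
    ring
lemma aCoeff_eq (α : ℕ) (i : ℕ) (x : ℝ) :
    aCoeff (α : ℝ) i x = (1 / (i.factorial : ℝ)) * ∑ j ∈ Finset.Icc 1 i,
      (-1:ℝ)^(i+j+1) * (((α+1).choose (j-1) : ℕ) : ℝ) * Wc (α+2) (i-j) * x^j := by
  unfold aCoeff
  congr 1
  refine Finset.sum_congr rfl fun j _ => ?_
  have c1 : ((α:ℝ) + 1) = ((α+1 : ℕ) : ℝ) := by push_cast; ring
  have c2 : ((α:ℝ) + 2) = ((α+2 : ℕ) : ℝ) := by push_cast; ring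
  have c3 : ((α:ℝ) + 3) = ((α+2 : ℕ) : ℝ) + 1 := by push_cast; ring
  rw [c1, c2, c3, gbinom_natCast, gbinom_natCast, poch_nat_choose]
  unfold Wc
  ring

lemma aCoeff_vanish (α i : ℕ) (x : ℝ) (h : 2*(α+2) < i) : aCoeff (α:ℝ) i x = 0 := by
  rw [aCoeff_eq]
  rw [Finset.sum_eq_zero, mul_zero]
  intro j hj
  simp only [Finset.mem_Icc] at hj
  by_cases hjB : j ≤ α + 2
  · unfold Wc
    rw [Nat.choose_eq_zero_of_lt (show α + 2 < i - j by omega)]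
    push_cast; ring
  · rw [Nat.choose_eq_zero_of_lt (show α + 1 < j - 1 by omega)]
    push_cast; ring

/-- for nonnegative integer α and k ≥ 1,
`∑_{i=k}^∞ C(i,k) a_i(x) = (-1)^{α+k} a_k(-x)`. -/
theorem statement4 (α : ℕ) (k : ℕ) (hk : 1 ≤ k) (x : ℝ) :
    ∑' i : ℕ, ((i + k).choose k : ℝ) * aCoeff (α : ℝ) (i + k) x
      = (-1 : ℝ) ^ (α + k) * aCoeff (α : ℝ) k (-x) := by
  set B := α + 2 with hB
  rw [tsum_eq_sum (s := Finset.range (2*B+1)) (fun i hi => by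
      rw [aCoeff_vanish α _ x (by simp only [Finset.mem_range, not_lt] at hi; omega)]
      ring)]
  have hL : ∀ i ∈ Finset.range (2*B+1), ((i+k).choose k : ℝ) * aCoeff (α:ℝ) (i+k) x
      = ∑ j ∈ Finset.Icc 1 (i+k),
          (((i+k).choose k : ℕ) : ℝ) / (((i+k).factorial : ℝ))
            * ((-1:ℝ)^(i+k+j+1) * Wc B (i+k-j)) * ((((α+1).choose (j-1) : ℕ) : ℝ) * x^j) := by
    intro i _
    rw [aCoeff_eq, ← mul_assoc, Finset.mul_sum]
    refine Finset.sum_congr rfl fun j _ => ?_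
    rw [hB]
    ring
  rw [Finset.sum_congr rfl hL]
  rw [Finset.sum_comm' (s := Finset.range (2*B+1)) (t := fun i => Finset.Icc 1 (i+k))
      (t' := Finset.Icc 1 (2*B+k)) (s' := fun j => Finset.Icc (j-k) (2*B))
      (h := by intro i j; simp only [Finset.mem_range, Finset.mem_Icc]; omega)]
  have hR : ∀ j ∈ Finset.Icc 1 (2*B+k),
      ∑ i ∈ Finset.Icc (j-k) (2*B),
          (((i+k).choose k : ℕ) : ℝ) / (((i+k).factorial : ℝ))
            * ((-1:ℝ)^(i+k+j+1) * Wc B (i+k-j)) * ((((α+1).choose (j-1) : ℕ) : ℝ) * x^j)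
        = (if j ≤ k then
            (-1:ℝ)^(B+k) * (1/(k.factorial : ℝ)) * ((-1:ℝ)^(k+j+1) * (-1:ℝ)^j * Wc B (k-j))
          else 0) * ((((α+1).choose (j-1) : ℕ) : ℝ) * x^j) := by
    intro j hj
    simp only [Finset.mem_Icc] at hj
    by_cases hjB : j ≤ B
    · rw [← Finset.sum_mul, perj B k j hk hj.1 hjB]
    · rw [Nat.choose_eq_zero_of_lt (show α + 1 < j - 1 by omega)]
      push_cast
      simp
  rw [Finset.sum_congr rfl hR]
  have hsub : ∑ j ∈ Finset.Icc 1 (2*B+k),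
      (if j ≤ k then
          (-1:ℝ)^(B+k) * (1/(k.factorial : ℝ)) * ((-1:ℝ)^(k+j+1) * (-1:ℝ)^j * Wc B (k-j))
        else 0) * ((((α+1).choose (j-1) : ℕ) : ℝ) * x^j)
      = ∑ j ∈ Finset.Icc 1 k,
          (if j ≤ k then
            (-1:ℝ)^(B+k) * (1/(k.factorial : ℝ)) * ((-1:ℝ)^(k+j+1) * (-1:ℝ)^j * Wc B (k-j))
          else 0) * ((((α+1).choose (j-1) : ℕ) : ℝ) * x^j) := by
    refine (Finset.sum_subset (fun a ha => ?_) (fun a hmem ha => ?_)).symm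
    · simp only [Finset.mem_Icc] at ha ⊢; omega
    · simp only [Finset.mem_Icc] at hmem
      simp only [Finset.mem_Icc, not_and, not_le] at ha
      rw [if_neg (by omega)]
      ring
  rw [hsub]
  rw [aCoeff_eq, Finset.mul_sum, Finset.mul_sum]
  refine Finset.sum_congr rfl fun j hj => ?_
  simp only [Finset.mem_Icc] at hj
  rw [if_pos hj.2]
  have hsg : (-1:ℝ)^(B+k) = (-1:ℝ)^(α+k) := neg_one_pow_shift _ _ ⟨1, Or.inl (by simp only [hB]; omega)⟩
  rw [hsg, show (-x)^j = (-1:ℝ)^j * x^j by rw [neg_pow]]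
  rw [hB]
  ring
end

section
/- The polynomial y(x) = L_n^{0,M,N}(x) = A₀L_n(x) + A₁L_n'(x) + A₂L_n''(x), with L_n the classical Laguerre polynomial (α = 0), A₀ = 1 + Mn + (1/6)Nn(n−1)(2n−1) + (1/12)MNn²(n²−1), A₁ = M + Nn(n−1) + (1/3)MNn(n²−1), A₂ = Nn + (1/2)MNn(n+1), satisfies the explicit tenth-order linear differential equation: (1/60)MNx⁵y^{(10)} + (1/12)MN(5x⁴−x⁵)y^{(9)} + [(1/24)MN(72x³−45x⁴+4x⁵) − (1/12)Nx⁴]y^{(8)} + [(1/6)MN(36x²−72x³+20x⁴−x⁵) − (1/3)N(4x³−x⁴)]y^{(7)} + [(1/12)MN(−252x²+224x³−35x⁴+x⁵) + (1/2)N(−10x²+9x³−x⁴)]y^{(6)} + [(1/60)MN(1680x²−840x³+75x⁴−x⁵) + (1/6)N(−12x+81x²−33x³+2x⁴)]y^{(5)} + [(1/24)MN(−420x²+120x³−5x⁴) + (1/12)N(24+36x−150x²+34x³−x⁴) − (1/2)Mx²]y^{(4)} + [(1/3)MN(15x²−2x³) + (1/2)N(−6−2x+9x²−x³) + M(−2x+x²)]y^{(3)}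 + [−(1/2)MNx² + (1/2)N(2−x²) + (1/2)M(6x−x²) + x]y'' + [1−(M+1)x]y' + (1/120)n[MN(n²−1)(n+2)(2n+1) + 10Nn(n²−1) + 60M(n+1) + 120]y = 0, for every n ≥ 0. -/
open Finset Real

open Polynomial

noncomputable def lagC (n k : ℕ) : ℝ := (-1)^k * (n.choose k : ℝ) / (Nat.factorial k : ℝ)
noncomputable def lagP (n : ℕ) : Polynomial ℝ :=
  ∑ k ∈ Finset.range (n+1), Polynomial.C (lagC n k) * Polynomial.X ^ k

lemma gbinom_eq (n k : ℕ) (hk : k ≤ n) : gbinom (n : ℝ) (n - k) = (n.choose k : ℝ) := by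
  unfold gbinom poch
  have h1 : (n : ℝ) - ((n - k : ℕ) : ℝ) + 1 = (k : ℝ) + 1 := by
    rw [Nat.cast_sub hk]; ring
  rw [h1]
  have h2 := factorial_mul_ascPochhammer ℝ k (n - k)
  have h3 : k + (n - k) = n := by omega
  rw [h3] at h2
  have h4 : (ascPochhammer ℝ (n - k)).eval ((k : ℝ) + 1) = (n.factorial : ℝ) / (k.factorial : ℝ) := by
    field_simp
    linarith [h2]
  rw [h4]
  have h5 := Nat.choose_mul_factorial_mul_factorial hk
  have h5' : ((n.choose k : ℕ) : ℝ) * (k.factorial : ℝ) * ((n-k).factorial : ℝ) = (n.factorial : ℝ) := by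
    exact_mod_cast congrArg (Nat.cast : ℕ → ℝ) h5
  have hkf : (k.factorial : ℝ) ≠ 0 := Nat.cast_ne_zero.mpr k.factorial_ne_zero
  have hnkf : ((n-k).factorial : ℝ) ≠ 0 := Nat.cast_ne_zero.mpr (n-k).factorial_ne_zero
  field_simp
  linarith [h5']

lemma lag_eq (n : ℕ) : lag 0 n = fun t => (lagP n).eval t := by
  funext t
  unfold lag lagP
  rw [eval_finset_sum]
  refine Finset.sum_congr rfl fun k hk => ?_
  have hk' : k ≤ n := by simpa [Nat.lt_succ_iff] using Finset.mem_range.mp hk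
  rw [add_zero, gbinom_eq n k hk']
  simp only [eval_mul, eval_pow, eval_C, eval_X, lagC]
  ring

lemma iteratedDeriv_polyEval (m : ℕ) : ∀ (p : Polynomial ℝ),
    iteratedDeriv m (fun t => p.eval t) = fun t => (derivative^[m] p).eval t := by
  induction m with
  | zero => intro p; simp [iteratedDeriv_zero]
  | succ m ih =>
    intro p
    rw [iteratedDeriv_succ, ih p]
    funext t
    rw [Polynomial.deriv, Function.iterate_succ_apply']

lemma lagC_rec (n k : ℕ) (hk : k < n) :
    lagC n (k+1) * ((k:ℝ)+1)^2 = ((k:ℝ) - (n:ℝ)) * lagC n k := by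
  have h := Nat.choose_succ_right_eq n k
  have h' : (n.choose (k+1) : ℝ) * ((k:ℝ)+1) = (n.choose k : ℝ) * ((n:ℝ) - (k:ℝ)) := by
    rw [← Nat.cast_sub hk.le]
    exact_mod_cast congrArg (Nat.cast : ℕ → ℝ) h
  unfold lagC
  rw [Nat.factorial_succ]
  have hkf : (k.factorial : ℝ) ≠ 0 := Nat.cast_ne_zero.mpr k.factorial_ne_zero
  have hk1 : ((k:ℝ)+1) ≠ 0 := by positivity
  field_simp
  push_cast
  linear_combination (-(-1:ℝ)^k * ((k:ℝ)+1) * (Nat.factorial k : ℝ)) * h'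

lemma termId (k : ℕ) :
    X * derivative (derivative ((X:Polynomial ℝ)^k)) + (1 - X) * derivative ((X:Polynomial ℝ)^k)
      = C (((k:ℝ))^2) * X^(k-1) - C ((k:ℝ)) * X^k := by
  match k with
  | 0 => simp
  | 1 => simp
  | (j+2) =>
    rw [derivative_X_pow, derivative_C_mul, derivative_X_pow]
    push_cast
    simp only [map_add, map_one, map_ofNat, map_pow, map_mul, map_natCast]
    ring

lemma keyP (n : ℕ) :
    X * derivative^[2] (lagP n) + (1 - X) * derivative (lagP n)
      + C ((n:ℝ)) * lagP n = 0 := by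
  unfold lagP
  rw [show (2:ℕ) = 1 + 1 from rfl, Function.iterate_add_apply, Function.iterate_one]
  rw [map_sum, map_sum, Finset.mul_sum, Finset.mul_sum, Finset.mul_sum,
    ← Finset.sum_add_distrib, ← Finset.sum_add_distrib]
  have hterm : ∀ k, X * derivative (derivative (C (lagC n k) * X^k))
      + (1 - X) * derivative (C (lagC n k) * X^k)
      + C ((n:ℝ)) * (C (lagC n k) * X^k)
      = C (lagC n k * (k:ℝ)^2) * X^(k-1) + C (lagC n k * ((n:ℝ)-(k:ℝ))) * X^k := by
    intro k
    rw [derivative_C_mul, derivative_C_mul]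
    have h' := termId k
    simp only [map_mul, map_pow, map_sub] at h' ⊢
    linear_combination (C (lagC n k) : Polynomial ℝ) * h'
  rw [Finset.sum_congr rfl fun k _ => hterm k]
  rw [Finset.sum_add_distrib, Finset.sum_range_succ', Finset.sum_range_succ]
  have h0 : C (lagC n 0 * ((0:ℕ):ℝ)^2) * (X:Polynomial ℝ)^(0-1) = 0 := by
    simp
  have hn : C (lagC n n * ((n:ℝ)-(n:ℝ))) * (X:Polynomial ℝ)^n = 0 := by
    simp
  rw [h0, hn, add_zero, add_zero, ← Finset.sum_add_distrib]
  refine Finset.sum_eq_zero fun i hi => ?_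
  have hi' : i < n := Finset.mem_range.mp hi
  have hrec := lagC_rec n i hi'
  have e : (i+1) - 1 = i := rfl
  rw [e]
  have : lagC n (i+1) * ((i+1:ℕ):ℝ)^2 + lagC n i * ((n:ℝ)-(i:ℝ)) = 0 := by
    push_cast
    linear_combination hrec
  calc C (lagC n (i+1) * ((i+1:ℕ):ℝ)^2) * (X:Polynomial ℝ)^i
        + C (lagC n i * ((n:ℝ)-(i:ℝ))) * X^i
      = C (lagC n (i+1) * ((i+1:ℕ):ℝ)^2 + lagC n i * ((n:ℝ)-(i:ℝ))) * X^i := by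
        rw [map_add, add_mul]
    _ = 0 := by rw [this]; simp

lemma relP (n : ℕ) : ∀ m : ℕ,
    X * derivative^[m+2] (lagP n) + (C ((m:ℝ)+1) - X) * derivative^[m+1] (lagP n)
      + C ((n:ℝ) - (m:ℝ)) * derivative^[m] (lagP n) = 0 := by
  intro m
  induction m with
  | zero =>
    have h := keyP n
    simpa using h
  | succ m ih =>
    have h := congrArg derivative ih
    simp only [derivative_add, derivative_mul, derivative_X, derivative_sub,
      derivative_C, derivative_one, map_zero, ← Function.iterate_succ_apply' derivative] at h
    rw [show (m+2).succ = m+3 from rfl, show (m+1).succ = m+2 from rfl,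
      show m.succ = m+1 from rfl] at h
    rw [show m+1+2 = m+3 from rfl, show m+1+1 = m+2 from rfl]
    push_cast at h ⊢
    simp only [map_add, map_sub, map_one, map_natCast] at h ⊢
    linear_combination h

lemma iterDerivComb (a b c : ℝ) : ∀ (k : ℕ) (p : Polynomial ℝ),
    derivative^[k] (C a * p + C b * derivative p + C c * derivative^[2] p)
    = C a * derivative^[k] p + C b * derivative^[k+1] p + C c * derivative^[k+2] p := by
  intro k
  induction k with
  | zero => intro p; simp
  | succ k ih =>
    intro p
    rw [Function.iterate_succ_apply, derivative_add, derivative_add,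
      derivative_C_mul, derivative_C_mul, derivative_C_mul]
    rw [show derivative (derivative^[2] p) = derivative^[2] (derivative p) from rfl]
    rw [ih (derivative p)]
    rw [show derivative^[k] (derivative p) = derivative^[k+1] p from
        (Function.iterate_succ_apply derivative k p).symm,
      show derivative^[k+1] (derivative p) = derivative^[k+1+1] p from
        (Function.iterate_succ_apply derivative (k+1) p).symm,
      show derivative^[k+2] (derivative p) = derivative^[k+1+2] p from
        (Function.iterate_succ_apply derivative (k+2) p).symm]

/-- the explicit tenth order differential equation for `L_n^{0,M,N}(x)`. -/
theorem statement16 (M N : ℝ) (n : ℕ) (x : ℝ) :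
    let A0 : ℝ := 1 + M * n + (1/6) * N * n * (n - 1) * (2 * n - 1)
      + (1/12) * M * N * (n : ℝ) ^ 2 * ((n : ℝ) ^ 2 - 1)
    let A1 : ℝ := M + N * n * (n - 1) + (1/3) * M * N * n * ((n : ℝ) ^ 2 - 1)
    let A2 : ℝ := N * n + (1/2) * M * N * n * (n + 1)
    let y : ℝ → ℝ := fun t =>
      A0 * lag 0 n t + A1 * deriv (lag 0 n) t + A2 * iteratedDeriv 2 (lag 0 n) t
    (1/60) * M * N * x ^ 5 * iteratedDeriv 10 y x
      + (1/12) * M * N * (5 * x ^ 4 - x ^ 5) * iteratedDeriv 9 y x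
      + ((1/24) * M * N * (72 * x ^ 3 - 45 * x ^ 4 + 4 * x ^ 5)
          - (1/12) * N * x ^ 4) * iteratedDeriv 8 y x
      + ((1/6) * M * N * (36 * x ^ 2 - 72 * x ^ 3 + 20 * x ^ 4 - x ^ 5)
          - (1/3) * N * (4 * x ^ 3 - x ^ 4)) * iteratedDeriv 7 y x
      + ((1/12) * M * N * (-252 * x ^ 2 + 224 * x ^ 3 - 35 * x ^ 4 + x ^ 5)
          + (1/2) * N * (-10 * x ^ 2 + 9 * x ^ 3 - x ^ 4)) * iteratedDeriv 6 y x
      + ((1/60) * M * N * (1680 * x ^ 2 - 840 * x ^ 3 + 75 * x ^ 4 - x ^ 5)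
          + (1/6) * N * (-12 * x + 81 * x ^ 2 - 33 * x ^ 3 + 2 * x ^ 4)) * iteratedDeriv 5 y x
      + ((1/24) * M * N * (-420 * x ^ 2 + 120 * x ^ 3 - 5 * x ^ 4)
          + (1/12) * N * (24 + 36 * x - 150 * x ^ 2 + 34 * x ^ 3 - x ^ 4)
          - (1/2) * M * x ^ 2) * iteratedDeriv 4 y x
      + ((1/3) * M * N * (15 * x ^ 2 - 2 * x ^ 3)
          + (1/2) * N * (-6 - 2 * x + 9 * x ^ 2 - x ^ 3)
          + M * (-2 * x + x ^ 2)) * iteratedDeriv 3 y x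
      + (-(1/2) * M * N * x ^ 2 + (1/2) * N * (2 - x ^ 2) + (1/2) * M * (6 * x - x ^ 2) + x) *
          iteratedDeriv 2 y x
      + (1 - (M + 1) * x) * deriv y x
      + (1/120) * n * (M * N * ((n : ℝ) ^ 2 - 1) * (n + 2) * (2 * n + 1)
          + 10 * N * n * ((n : ℝ) ^ 2 - 1) + 60 * M * (n + 1) + 120) * y x = 0 := by
  intro A0 A1 A2 y
  have hA0 : A0 = 1 + M * n + (1/6) * N * n * (n - 1) * (2 * n - 1)
      + (1/12) * M * N * (n : ℝ) ^ 2 * ((n : ℝ) ^ 2 - 1) := rfl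
  have hA1 : A1 = M + N * n * (n - 1) + (1/3) * M * N * n * ((n : ℝ) ^ 2 - 1) := rfl
  have hA2 : A2 = N * n + (1/2) * M * N * n * (n + 1) := rfl
  set Q : Polynomial ℝ := Polynomial.C A0 * lagP n + Polynomial.C A1 * derivative (lagP n)
    + Polynomial.C A2 * derivative^[2] (lagP n) with hQ
  have hy : y = fun t => Q.eval t := by
    funext t
    show A0 * lag 0 n t + A1 * deriv (lag 0 n) t + A2 * iteratedDeriv 2 (lag 0 n) t = _
    rw [lag_eq n]
    have hd : deriv (fun t => (lagP n).eval t) = fun t => (derivative^[1] (lagP n)).eval t := by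
      rw [← iteratedDeriv_one, iteratedDeriv_polyEval]
    rw [hd, iteratedDeriv_polyEval]
    simp [hQ]
  have hiter : ∀ k : ℕ, iteratedDeriv k y x
      = A0 * (derivative^[k] (lagP n)).eval x + A1 * (derivative^[k+1] (lagP n)).eval x
        + A2 * (derivative^[k+2] (lagP n)).eval x := by
    intro k
    rw [hy, iteratedDeriv_polyEval, hQ, iterDerivComb]
    simp
  have hy0 : y x = A0 * (derivative^[0] (lagP n)).eval x + A1 * (derivative^[1] (lagP n)).eval x
      + A2 * (derivative^[2] (lagP n)).eval x := by
    have := hiter 0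
    rwa [iteratedDeriv_zero] at this
  have hderiv : deriv y x = A0 * (derivative^[1] (lagP n)).eval x
      + A1 * (derivative^[2] (lagP n)).eval x + A2 * (derivative^[3] (lagP n)).eval x := by
    have := hiter 1
    rwa [iteratedDeriv_one] at this
  have hrel : ∀ m : ℕ, x * (derivative^[m+2] (lagP n)).eval x
      + (((m:ℝ)+1) - x) * (derivative^[m+1] (lagP n)).eval x
      + ((n:ℝ) - (m:ℝ)) * (derivative^[m] (lagP n)).eval x = 0 := by
    intro m
    have h := congrArg (Polynomial.eval x) (relP n m)
    simpa using h
  have h0 := hrel 0; have h1 := hrel 1; have h2 := hrel 2; have h3 := hrel 3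
  have h4 := hrel 4; have h5 := hrel 5; have h6 := hrel 6; have h7 := hrel 7
  have h8 := hrel 8; have h9 := hrel 9; have h10 := hrel 10
  push_cast at h0 h1 h2 h3 h4 h5 h6 h7 h8 h9 h10
  rw [hiter 10, hiter 9, hiter 8, hiter 7, hiter 6, hiter 5, hiter 4, hiter 3, hiter 2,
    hderiv, hy0, hA0, hA1, hA2]
  linear_combination (norm := ring1)
      ((1) + ((1/2))*M + ((-1/60))*M*N + ((1/12))*(n:ℝ)*N + ((3/2))*(n:ℝ)*M + ((1/24))*(n:ℝ)*M*N + ((-1/360))*(n:ℝ)*M*N^2 + ((1/2))*(n:ℝ)*M^2 + ((-1/60))*(n:ℝ)*M^2*N + ((-1/2))*(n:ℝ)^2*N + ((-1/72))*(n:ℝ)^2*N^2 + ((-1/3))*(n:ℝ)^2*M*N + ((1/720))*(n:ℝ)^2*M*N^2 + ((1/2))*(n:ℝ)^2*M^2 + ((-1/12))*(n:ℝ)^2*M^2*N + ((1/720))*(n:ℝ)^2*M^2*N^2 + ((5/12))*(n:ℝ)^3*N + ((1/24))*(n:ℝ)^3*N^2 + ((-1/24))*(n:ℝ)^3*M*N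 + ((1/45))*(n:ℝ)^3*M*N^2 + ((-1/24))*(n:ℝ)^3*M^2*N + ((1/288))*(n:ℝ)^3*M^2*N^2 + ((-1/72))*(n:ℝ)^4*N^2 + ((7/20))*(n:ℝ)^4*M*N + ((-1/144))*(n:ℝ)^4*M*N^2 + ((1/12))*(n:ℝ)^4*M^2*N + ((-1/720))*(n:ℝ)^4*M^2*N^2 + ((-1/24))*(n:ℝ)^5*N^2 + ((-23/720))*(n:ℝ)^5*M*N^2 + ((7/120))*(n:ℝ)^5*M^2*N + ((-1/144))*(n:ℝ)^5*M^2*N^2 + ((1/36))*(n:ℝ)^6*N^2 + ((1/180))*(n:ℝ)^6*M*N^2 + ((-1/720))*(n:ℝ)^6*M^2*N^2 + ((1/80))*(n:ℝ)^7*M*N^2 + ((1/288))*(n:ℝ)^7*M^2*N^2 + ((1/720))*(n:ℝ)^8*M^2*N^2) * h0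
      + (((1/2))*M + ((-1/60))*M*N + ((-1/12))*(n:ℝ)*N + ((1/40))*(n:ℝ)*M*N + ((-1/360))*(n:ℝ)*M*N^2 + ((11/12))*(n:ℝ)^2*N + ((-1/72))*(n:ℝ)^2*N^2 + ((83/120))*(n:ℝ)^2*M*N + ((-13/720))*(n:ℝ)^2*M*N^2 + ((1/8))*(n:ℝ)^2*M^2*N + ((-1/240))*(n:ℝ)^2*M^2*N^2 + ((-1/18))*(n:ℝ)^3*N^2 + ((13/20))*(n:ℝ)^3*M*N + ((-7/144))*(n:ℝ)^3*M*N^2 + ((1/4))*(n:ℝ)^3*M^2*N + ((-7/480))*(n:ℝ)^3*M^2*N^2 + ((1/72))*(n:ℝ)^4*N^2 + ((-1/72))*(n:ℝ)^4*M*N^2 + ((1/8))*(n:ℝ)^4*M^2*N + ((-1/96))*(n:ℝ)^4*M^2*N^2 + ((1/18))*(n:ℝ)^5*N^2 + ((37/720))*(n:ℝ)^5*M*N^2 + ((1/96))*(n:ℝ)^5*M^2*N^2 + ((23/720))*(n:ℝ)^6*M*N^2 + ((7/480))*(n:ℝ)^6*M^2*N^2 + ((1/240))*(n:ℝ)^7*M^2*N^2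 + ((1/2))*x*M + ((1/60))*x*M*N + ((1/12))*x*(n:ℝ)*N + ((17/120))*x*(n:ℝ)*M*N + ((1/360))*x*(n:ℝ)*M*N^2 + ((1/2))*x*(n:ℝ)*M^2 + ((1/60))*x*(n:ℝ)*M^2*N + ((1/12))*x*(n:ℝ)^2*N + ((1/72))*x*(n:ℝ)^2*N^2 + ((-13/120))*x*(n:ℝ)^2*M*N + ((1/720))*x*(n:ℝ)^2*M*N^2 + ((1/60))*x*(n:ℝ)^2*M^2*N + ((-1/720))*x*(n:ℝ)^2*M^2*N^2 + ((-1/36))*x*(n:ℝ)^3*N^2 + ((4/15))*x*(n:ℝ)^3*M*N + ((-1/48))*x*(n:ℝ)^3*M*N^2 + ((7/120))*x*(n:ℝ)^3*M^2*N + ((-7/1440))*x*(n:ℝ)^3*M^2*N^2 + ((-1/72))*x*(n:ℝ)^4*N^2 + ((-1/72))*x*(n:ℝ)^4*M*N^2 + ((7/120))*x*(n:ℝ)^4*M^2*N + ((-1/288))*x*(n:ℝ)^4*M^2*N^2 + ((1/36))*x*(n:ℝ)^5*N^2 + ((13/720))*x*(n:ℝ)^5*M*N^2 + ((1/288))*x*(n:ℝ)^5*M^2*N^2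 + ((1/80))*x*(n:ℝ)^6*M*N^2 + ((7/1440))*x*(n:ℝ)^6*M^2*N^2 + ((1/720))*x*(n:ℝ)^7*M^2*N^2) * h1
      + (((-1/2))*N + ((-1/60))*M*N + ((1/6))*(n:ℝ)*N + ((-1/12))*(n:ℝ)*N^2 + ((-19/60))*(n:ℝ)*M*N + ((-1/360))*(n:ℝ)*M*N^2 + ((7/36))*(n:ℝ)^2*N^2 + ((1/30))*(n:ℝ)^2*M*N + ((11/360))*(n:ℝ)^2*M*N^2 + ((-1/12))*(n:ℝ)^3*N^2 + ((1/120))*(n:ℝ)^3*M*N^2 + ((-1/36))*(n:ℝ)^4*N^2 + ((-11/360))*(n:ℝ)^4*M*N^2 + ((-1/180))*(n:ℝ)^5*M*N^2 + ((-1/2))*x*M + ((1/60))*x*M*N + ((1/2))*x*M^2 + ((-5/12))*x*(n:ℝ)*N + ((-91/120))*x*(n:ℝ)*M*N + ((1/360))*x*(n:ℝ)*M*N^2 + ((-1/2))*x*(n:ℝ)*M^2 + ((-19/120))*x*(n:ℝ)*M^2*N + ((-1/12))*x*(n:ℝ)^2*N + ((1/72))*x*(n:ℝ)^2*N^2 +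 ((7/24))*x*(n:ℝ)^2*M*N + ((1/80))*x*(n:ℝ)^2*M*N^2 + ((-1/24))*x*(n:ℝ)^2*M^2*N + ((1/720))*x*(n:ℝ)^2*M^2*N^2 + ((1/36))*x*(n:ℝ)^3*N^2 + ((-4/15))*x*(n:ℝ)^3*M*N + ((1/48))*x*(n:ℝ)^3*M*N^2 + ((7/120))*x*(n:ℝ)^3*M^2*N + ((7/1440))*x*(n:ℝ)^3*M^2*N^2 + ((-1/72))*x*(n:ℝ)^4*N^2 + ((-7/120))*x*(n:ℝ)^4*M^2*N + ((1/288))*x*(n:ℝ)^4*M^2*N^2 + ((-1/36))*x*(n:ℝ)^5*N^2 + ((-17/720))*x*(n:ℝ)^5*M*N^2 + ((-1/288))*x*(n:ℝ)^5*M^2*N^2 + ((-1/80))*x*(n:ℝ)^6*M*N^2 + ((-7/1440))*x*(n:ℝ)^6*M^2*N^2 + ((-1/720))*x*(n:ℝ)^7*M^2*N^2 + ((1/4))*x^2*N + ((29/120))*x^2*M*N + ((1/12))*x^2*(n:ℝ)*N + ((1/24))*x^2*(n:ℝ)*N^2 + ((41/120))*x^2*(n:ℝ)*M*N + ((29/720))*x^2*(n:ℝ)*M*N^2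 + ((29/120))*x^2*(n:ℝ)*M^2*N + ((-1/9))*x^2*(n:ℝ)^2*N^2 + ((1/10))*x^2*(n:ℝ)^2*M*N + ((-91/720))*x^2*(n:ℝ)^2*M*N^2 + ((11/120))*x^2*(n:ℝ)^2*M^2*N + ((-29/1440))*x^2*(n:ℝ)^2*M^2*N^2 + ((1/24))*x^2*(n:ℝ)^3*N^2 + ((11/360))*x^2*(n:ℝ)^3*M*N^2 + ((1/60))*x^2*(n:ℝ)^3*M^2*N + ((-11/1440))*x^2*(n:ℝ)^3*M^2*N^2 + ((1/36))*x^2*(n:ℝ)^4*N^2 + ((31/720))*x^2*(n:ℝ)^4*M*N^2 + ((3/160))*x^2*(n:ℝ)^4*M^2*N^2 + ((1/80))*x^2*(n:ℝ)^5*M*N^2 + ((11/1440))*x^2*(n:ℝ)^5*M^2*N^2 + ((1/720))*x^2*(n:ℝ)^6*M^2*N^2) * h2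
      + (((1/2))*N + ((-7/20))*M*N + ((5/12))*(n:ℝ)*N^2 + ((2/5))*(n:ℝ)*M*N + ((13/120))*(n:ℝ)*M*N^2 + ((-1/2))*(n:ℝ)^2*N^2 + ((-1/60))*(n:ℝ)^2*M*N^2 + ((1/12))*(n:ℝ)^3*N^2 + ((-13/120))*(n:ℝ)^3*M*N^2 + ((1/60))*(n:ℝ)^4*M*N^2 + ((1/2))*x*N + ((1/60))*x*M*N + ((-1/2))*x*M^2 + ((1/3))*x*(n:ℝ)*N + ((1/12))*x*(n:ℝ)*N^2 + ((17/12))*x*(n:ℝ)*M*N + ((1/360))*x*(n:ℝ)*M*N^2 + ((41/120))*x*(n:ℝ)*M^2*N + ((-7/36))*x*(n:ℝ)^2*N^2 + ((-11/60))*x*(n:ℝ)^2*M*N + ((-11/360))*x*(n:ℝ)^2*M*N^2 + ((9/40))*x*(n:ℝ)^2*M^2*N + ((1/12))*x*(n:ℝ)^3*N^2 + ((-1/120))*x*(n:ℝ)^3*M*N^2 + ((-7/60))*x*(n:ℝ)^3*M^2*N + ((1/36))*x*(n:ℝ)^4*N^2 + ((11/360))*x*(n:ℝ)^4*M*N^2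 + ((1/180))*x*(n:ℝ)^5*M*N^2 + ((-5/4))*x^2*N + ((-151/120))*x^2*M*N + ((1/6))*x^2*M^2*N + ((-1/6))*x^2*(n:ℝ)*N + ((-3/8))*x^2*(n:ℝ)*N^2 + ((-3/2))*x^2*(n:ℝ)*M*N + ((-331/720))*x^2*(n:ℝ)*M*N^2 + ((-41/30))*x^2*(n:ℝ)*M^2*N + ((-1/18))*x^2*(n:ℝ)*M^2*N^2 + ((49/72))*x^2*(n:ℝ)^2*N^2 + ((-1/5))*x^2*(n:ℝ)^2*M*N + ((101/120))*x^2*(n:ℝ)^2*M*N^2 + ((-19/60))*x^2*(n:ℝ)^2*M^2*N + ((143/1440))*x^2*(n:ℝ)^2*M^2*N^2 + ((-1/4))*x^2*(n:ℝ)^3*N^2 + ((-73/360))*x^2*(n:ℝ)^3*M*N^2 + ((-1/30))*x^2*(n:ℝ)^3*M^2*N + ((7/90))*x^2*(n:ℝ)^3*M^2*N^2 + ((-1/18))*x^2*(n:ℝ)^4*N^2 + ((-37/240))*x^2*(n:ℝ)^4*M*N^2 + ((-139/1440))*x^2*(n:ℝ)^4*M^2*N^2 + ((-1/40))*x^2*(n:ℝ)^5*M*N^2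 + ((-1/45))*x^2*(n:ℝ)^5*M^2*N^2 + ((-1/360))*x^2*(n:ℝ)^6*M^2*N^2 + ((1/12))*x^3*N + ((17/120))*x^3*M*N + ((1/72))*x^3*(n:ℝ)*N^2 + ((1/10))*x^3*(n:ℝ)*M*N + ((17/720))*x^3*(n:ℝ)*M*N^2 + ((17/120))*x^3*(n:ℝ)*M^2*N + ((-1/24))*x^3*(n:ℝ)^2*N^2 + ((-3/40))*x^3*(n:ℝ)^2*M*N^2 + ((1/60))*x^3*(n:ℝ)^2*M^2*N + ((-17/1440))*x^3*(n:ℝ)^2*M^2*N^2 + ((1/36))*x^3*(n:ℝ)^3*N^2 + ((7/180))*x^3*(n:ℝ)^3*M*N^2 + ((-1/720))*x^3*(n:ℝ)^3*M^2*N^2 + ((1/80))*x^3*(n:ℝ)^4*M*N^2 + ((17/1440))*x^3*(n:ℝ)^4*M^2*N^2 + ((1/720))*x^3*(n:ℝ)^5*M^2*N^2) * h3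
      + (((2/5))*M*N + ((-2/3))*(n:ℝ)*N^2 + ((-4/15))*(n:ℝ)*M*N^2 + ((1/3))*(n:ℝ)^2*N^2 + ((-1/6))*(n:ℝ)^2*M*N^2 + ((1/10))*(n:ℝ)^3*M*N^2 + ((-1/2))*x*N + ((7/20))*x*M*N + ((-5/12))*x*(n:ℝ)*N^2 + ((-4/5))*x*(n:ℝ)*M*N + ((-13/120))*x*(n:ℝ)*M*N^2 + ((-1/5))*x*(n:ℝ)*M^2*N + ((1/2))*x*(n:ℝ)^2*N^2 + ((1/60))*x*(n:ℝ)^2*M*N^2 + ((-1/5))*x*(n:ℝ)^2*M^2*N + ((-1/12))*x*(n:ℝ)^3*N^2 + ((13/120))*x*(n:ℝ)^3*M*N^2 + ((-1/60))*x*(n:ℝ)^4*M*N^2 + ((7/4))*x^2*N + ((239/120))*x^2*M*N + ((-13/12))*x^2*M^2*N + ((1/12))*x^2*(n:ℝ)*N + ((11/8))*x^2*(n:ℝ)*N^2 + ((79/40))*x^2*(n:ℝ)*M*N + ((1499/720))*x^2*(n:ℝ)*M*N^2 + ((331/120))*x^2*(n:ℝ)*M^2*N + ((61/144))*x^2*(n:ℝ)*M^2*N^2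 + ((-29/18))*x^2*(n:ℝ)^2*N^2 + ((1/10))*x^2*(n:ℝ)^2*M*N + ((-181/80))*x^2*(n:ℝ)^2*M*N^2 + ((43/120))*x^2*(n:ℝ)^2*M^2*N + ((-139/1440))*x^2*(n:ℝ)^2*M^2*N^2 + ((3/8))*x^2*(n:ℝ)^3*N^2 + ((29/90))*x^2*(n:ℝ)^3*M*N^2 + ((1/60))*x^2*(n:ℝ)^3*M^2*N + ((-521/1440))*x^2*(n:ℝ)^3*M^2*N^2 + ((1/36))*x^2*(n:ℝ)^4*N^2 + ((43/240))*x^2*(n:ℝ)^4*M*N^2 + ((257/1440))*x^2*(n:ℝ)^4*M^2*N^2 + ((1/80))*x^2*(n:ℝ)^5*M*N^2 + ((31/1440))*x^2*(n:ℝ)^5*M^2*N^2 + ((1/720))*x^2*(n:ℝ)^6*M^2*N^2 + ((-1/4))*x^3*N + ((-73/120))*x^3*M*N + ((1/8))*x^3*M^2*N + ((-1/8))*x^3*(n:ℝ)*N^2 + ((-3/10))*x^3*(n:ℝ)*M*N + ((-193/720))*x^3*(n:ℝ)*M*N^2 + ((-27/40))*x^3*(n:ℝ)*M^2*N + ((-1/24))*x^3*(n:ℝ)*M^2*N^2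 + ((5/24))*x^3*(n:ℝ)^2*N^2 + ((7/15))*x^3*(n:ℝ)^2*M*N^2 + ((-1/20))*x^3*(n:ℝ)^2*M^2*N + ((5/96))*x^3*(n:ℝ)^2*M^2*N^2 + ((-1/12))*x^3*(n:ℝ)^3*N^2 + ((-29/180))*x^3*(n:ℝ)^3*M*N^2 + ((11/240))*x^3*(n:ℝ)^3*M^2*N^2 + ((-3/80))*x^3*(n:ℝ)^4*M*N^2 + ((-5/96))*x^3*(n:ℝ)^4*M^2*N^2 + ((-1/240))*x^3*(n:ℝ)^5*M^2*N^2 + ((1/60))*x^4*M*N + ((1/360))*x^4*(n:ℝ)*M*N^2 + ((1/60))*x^4*(n:ℝ)*M^2*N + ((-1/120))*x^4*(n:ℝ)^2*M*N^2 + ((-1/720))*x^4*(n:ℝ)^2*M^2*N^2 + ((1/180))*x^4*(n:ℝ)^3*M*N^2 + ((1/720))*x^4*(n:ℝ)^4*M^2*N^2) * h4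
      + (((1/3))*(n:ℝ)*N^2 + ((1/6))*(n:ℝ)*M*N^2 + ((1/6))*(n:ℝ)^2*M*N^2 + ((-2/5))*x*M*N + ((2/3))*x*(n:ℝ)*N^2 + ((4/15))*x*(n:ℝ)*M*N^2 + ((-1/3))*x*(n:ℝ)^2*N^2 + ((1/6))*x*(n:ℝ)^2*M*N^2 + ((-1/10))*x*(n:ℝ)^3*M*N^2 + ((-3/4))*x^2*N + ((-47/40))*x^2*M*N + ((29/12))*x^2*M^2*N + ((-19/8))*x^2*(n:ℝ)*N^2 + ((-49/60))*x^2*(n:ℝ)*M*N + ((-369/80))*x^2*(n:ℝ)*M*N^2 + ((-143/60))*x^2*(n:ℝ)*M^2*N + ((-179/144))*x^2*(n:ℝ)*M^2*N^2 + ((13/8))*x^2*(n:ℝ)^2*N^2 + ((1037/360))*x^2*(n:ℝ)^2*M*N^2 + ((-2/15))*x^2*(n:ℝ)^2*M^2*N + ((-109/288))*x^2*(n:ℝ)^2*M^2*N^2 + ((-1/6))*x^2*(n:ℝ)^3*N^2 + ((-19/120))*x^2*(n:ℝ)^3*M*N^2 + ((35/48))*x^2*(n:ℝ)^3*M^2*N^2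 + ((-49/720))*x^2*(n:ℝ)^4*M*N^2 + ((-41/288))*x^2*(n:ℝ)^4*M^2*N^2 + ((-1/144))*x^2*(n:ℝ)^5*M^2*N^2 + ((1/4))*x^3*N + ((39/40))*x^3*M*N + ((-5/8))*x^3*M^2*N + ((3/8))*x^3*(n:ℝ)*N^2 + ((3/10))*x^3*(n:ℝ)*M*N + ((17/16))*x^3*(n:ℝ)*M*N^2 + ((47/40))*x^3*(n:ℝ)*M^2*N + ((21/80))*x^3*(n:ℝ)*M^2*N^2 + ((-3/8))*x^3*(n:ℝ)^2*N^2 + ((-137/120))*x^3*(n:ℝ)^2*M*N^2 + ((1/20))*x^3*(n:ℝ)^2*M^2*N + ((-11/480))*x^3*(n:ℝ)^2*M^2*N^2 + ((1/12))*x^3*(n:ℝ)^3*N^2 + ((1/4))*x^3*(n:ℝ)^3*M*N^2 + ((-49/240))*x^3*(n:ℝ)^3*M^2*N^2 + ((3/80))*x^3*(n:ℝ)^4*M*N^2 + ((41/480))*x^3*(n:ℝ)^4*M^2*N^2 + ((1/240))*x^3*(n:ℝ)^5*M^2*N^2 + ((-1/15))*x^4*M*N + ((1/60))*x^4*M^2*N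 + ((-1/36))*x^4*(n:ℝ)*M*N^2 + ((-1/15))*x^4*(n:ℝ)*M^2*N + ((-1/180))*x^4*(n:ℝ)*M^2*N^2 + ((1/20))*x^4*(n:ℝ)^2*M*N^2 + ((1/180))*x^4*(n:ℝ)^2*M^2*N^2 + ((-1/45))*x^4*(n:ℝ)^3*M*N^2 + ((1/180))*x^4*(n:ℝ)^3*M^2*N^2 + ((-1/180))*x^4*(n:ℝ)^4*M^2*N^2) * h5
      + (((-1/3))*x*(n:ℝ)*N^2 + ((-1/6))*x*(n:ℝ)*M*N^2 + ((-1/6))*x*(n:ℝ)^2*M*N^2 + ((1/5))*x^2*M*N + ((-9/4))*x^2*M^2*N + ((23/12))*x^2*(n:ℝ)*N^2 + ((317/60))*x^2*(n:ℝ)*M*N^2 + ((3/4))*x^2*(n:ℝ)*M^2*N + ((85/48))*x^2*(n:ℝ)*M^2*N^2 + ((-7/12))*x^2*(n:ℝ)^2*N^2 + ((-41/24))*x^2*(n:ℝ)^2*M*N^2 + ((13/12))*x^2*(n:ℝ)^2*M^2*N^2 + ((1/120))*x^2*(n:ℝ)^3*M*N^2 + ((-31/48))*x^2*(n:ℝ)^3*M^2*N^2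 + ((1/24))*x^2*(n:ℝ)^4*M^2*N^2 + ((-1/12))*x^3*N + ((-83/120))*x^3*M*N + ((9/8))*x^3*M^2*N + ((-37/72))*x^3*(n:ℝ)*N^2 + ((-1/10))*x^3*(n:ℝ)*M*N + ((-295/144))*x^3*(n:ℝ)*M*N^2 + ((-107/120))*x^3*(n:ℝ)*M^2*N + ((-157/240))*x^3*(n:ℝ)*M^2*N^2 + ((7/24))*x^3*(n:ℝ)^2*N^2 + ((11/8))*x^3*(n:ℝ)^2*M*N^2 + ((-1/60))*x^3*(n:ℝ)^2*M^2*N + ((-349/1440))*x^3*(n:ℝ)^2*M^2*N^2 + ((-1/36))*x^3*(n:ℝ)^3*N^2 + ((-31/180))*x^3*(n:ℝ)^3*M*N^2 + ((253/720))*x^3*(n:ℝ)^3*M^2*N^2 + ((-1/80))*x^3*(n:ℝ)^4*M*N^2 + ((-89/1440))*x^3*(n:ℝ)^4*M^2*N^2 + ((-1/720))*x^3*(n:ℝ)^5*M^2*N^2 + ((1/10))*x^4*M*N + ((-1/15))*x^4*M^2*N + ((1/10))*x^4*(n:ℝ)*M*N^2 + ((1/10))*x^4*(n:ℝ)*M^2*N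 + ((11/360))*x^4*(n:ℝ)*M^2*N^2 + ((-7/60))*x^4*(n:ℝ)^2*M*N^2 + ((1/30))*x^4*(n:ℝ)^3*M*N^2 + ((-1/45))*x^4*(n:ℝ)^3*M^2*N^2 + ((1/120))*x^4*(n:ℝ)^4*M^2*N^2) * h6
      + (((3/4))*x^2*M^2*N + ((-7/12))*x^2*(n:ℝ)*N^2 + ((-3))*x^2*(n:ℝ)*M*N^2 + ((-59/48))*x^2*(n:ℝ)*M^2*N^2 + ((3/8))*x^2*(n:ℝ)^2*M*N^2 + ((-49/48))*x^2*(n:ℝ)^2*M^2*N^2 + ((5/24))*x^2*(n:ℝ)^3*M^2*N^2 + ((11/60))*x^3*M*N + ((-7/8))*x^3*M^2*N + ((1/3))*x^3*(n:ℝ)*N^2 + ((151/72))*x^3*(n:ℝ)*M*N^2 + ((1/4))*x^3*(n:ℝ)*M^2*N + ((193/240))*x^3*(n:ℝ)*M^2*N^2 + ((-1/12))*x^3*(n:ℝ)^2*N^2 + ((-49/60))*x^3*(n:ℝ)^2*M*N^2 + ((25/48))*x^3*(n:ℝ)^2*M^2*N^2 + ((2/45))*x^3*(n:ℝ)^3*M*N^2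 + ((-4/15))*x^3*(n:ℝ)^3*M^2*N^2 + ((1/60))*x^3*(n:ℝ)^4*M^2*N^2 + ((-1/15))*x^4*M*N + ((1/10))*x^4*M^2*N + ((-8/45))*x^4*(n:ℝ)*M*N^2 + ((-1/15))*x^4*(n:ℝ)*M^2*N + ((-1/15))*x^4*(n:ℝ)*M^2*N^2 + ((2/15))*x^4*(n:ℝ)^2*M*N^2 + ((-1/36))*x^4*(n:ℝ)^2*M^2*N^2 + ((-1/45))*x^4*(n:ℝ)^3*M*N^2 + ((1/30))*x^4*(n:ℝ)^3*M^2*N^2 + ((-1/180))*x^4*(n:ℝ)^4*M^2*N^2) * h7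
      + (((2/3))*x^2*(n:ℝ)*M*N^2 + ((1/3))*x^2*(n:ℝ)*M^2*N^2 + ((1/3))*x^2*(n:ℝ)^2*M^2*N^2 + ((1/4))*x^3*M^2*N + ((-1/12))*x^3*(n:ℝ)*N^2 + ((-11/10))*x^3*(n:ℝ)*M*N^2 + ((-39/80))*x^3*(n:ℝ)*M^2*N^2 + ((23/120))*x^3*(n:ℝ)^2*M*N^2 + ((-33/80))*x^3*(n:ℝ)^2*M^2*N^2 + ((3/40))*x^3*(n:ℝ)^3*M^2*N^2 + ((1/60))*x^4*M*N + ((-1/15))*x^4*M^2*N + ((61/360))*x^4*(n:ℝ)*M*N^2 + ((1/60))*x^4*(n:ℝ)*M^2*N + ((13/180))*x^4*(n:ℝ)*M^2*N^2 + ((-3/40))*x^4*(n:ℝ)^2*M*N^2 + ((7/144))*x^4*(n:ℝ)^2*M^2*N^2 + ((1/180))*x^4*(n:ℝ)^3*M*N^2 + ((-1/45))*x^4*(n:ℝ)^3*M^2*N^2 + ((1/720))*x^4*(n:ℝ)^4*M^2*N^2) * h8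
      + (((7/30))*x^3*(n:ℝ)*M*N^2 + ((7/60))*x^3*(n:ℝ)*M^2*N^2 + ((7/60))*x^3*(n:ℝ)^2*M^2*N^2 + ((1/60))*x^4*M^2*N + ((-1/12))*x^4*(n:ℝ)*M*N^2 + ((-7/180))*x^4*(n:ℝ)*M^2*N^2 + ((1/60))*x^4*(n:ℝ)^2*M*N^2 + ((-1/30))*x^4*(n:ℝ)^2*M^2*N^2 + ((1/180))*x^4*(n:ℝ)^3*M^2*N^2) * h9
      + (((1/60))*x^4*(n:ℝ)*M*N^2 + ((1/120))*x^4*(n:ℝ)*M^2*N^2 + ((1/120))*x^4*(n:ℝ)^2*M^2*N^2) * h10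
end
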